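/- arXiv:1606.08809 — 3 statements merged into one kernel-verified Lean document; each statement's English description precedes it below -/
import Mathlib

section
/- In X = ℝ², for any integer n ≥ 2 and θ with 1/√(2n) ≤ cos θ < 1/√2 and α = 1/(2n cos θ): αR_θ and αR_{−θ} are firmly nonexpansive, n·(αR_θ) + n·(αR_{−θ}) = Id, yet n·(αR_θ) is not firmly nonexpansive. Thus the partial sum property fails for firmly nonexpansive mappings. -/
open scoped RealInnerProductSpace

noncomputable def rot (θ : ℝ) (x : EuclideanSpace ℝ (Fin 2)) : EuclideanSpace ℝ (Fin 2) :=
  WithLp.toLp 2 ![Real.cos θ * x 0 - Real.sin θ * x 1, Real.sin θ * x 0 + Real.cos θ * x 1]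

def FirmlyNonexpansive {X : Type*} [NormedAddCommGroup X] [InnerProductSpace ℝ X]
    (T : X → X) : Prop :=
  ∀ x y : X, ‖T x - T y‖ ^ 2 ≤ ⟪x - y, T x - T y⟫

/-! Since `rot θ` is an isometry with `⟪x, rot θ x⟫ = cos θ * ‖x‖ ^ 2`, the map `β • rot θ` is firmly
nonexpansive exactly when `β ^ 2 ≤ β * cos θ`, i.e. when `0 ≤ β ≤ cos θ`. The lower bound on `cos θ`
gives `α ≤ cos θ`, while `n * α = 1 / (2 * cos θ)` exceeds `cos θ` by the upper bound. The sum identity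
is `rot θ + rot (-θ) = 2 * cos θ • id`. -/

open Real

lemma norm_sq_eq_fin_two (x : EuclideanSpace ℝ (Fin 2)) : ‖x‖ ^ 2 = x 0 ^ 2 + x 1 ^ 2 := by
  simp [EuclideanSpace.norm_sq_eq, Fin.sum_univ_two]

lemma inner_eq_fin_two (x y : EuclideanSpace ℝ (Fin 2)) : ⟪x, y⟫ = x 0 * y 0 + x 1 * y 1 := by
  simp [PiLp.inner_apply, Fin.sum_univ_two, mul_comm]

lemma rot_sub (θ : ℝ) (x y : EuclideanSpace ℝ (Fin 2)) : rot θ x - rot θ y = rot θ (x - y) := by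
  ext i; fin_cases i <;> simp [rot] <;> ring

lemma norm_sq_rot (θ : ℝ) (x : EuclideanSpace ℝ (Fin 2)) : ‖rot θ x‖ ^ 2 = ‖x‖ ^ 2 := by
  simp only [norm_sq_eq_fin_two, rot, Matrix.cons_val_zero, Matrix.cons_val_one]
  linear_combination (x 0 ^ 2 + x 1 ^ 2) * sin_sq_add_cos_sq θ

lemma inner_rot_self (θ : ℝ) (x : EuclideanSpace ℝ (Fin 2)) : ⟪x, rot θ x⟫ = cos θ * ‖x‖ ^ 2 := by
  simp only [inner_eq_fin_two, norm_sq_eq_fin_two, rot, Matrix.cons_val_zero,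
    Matrix.cons_val_one]
  ring

lemma rot_add_rot_neg (θ : ℝ) (x : EuclideanSpace ℝ (Fin 2)) :
    rot θ x + rot (-θ) x = (2 * cos θ) • x := by
  ext i; fin_cases i <;> simp [rot] <;> ring

theorem firmlyNonexpansive_smul_rot_iff (β θ : ℝ) :
    FirmlyNonexpansive (fun x => β • rot θ x) ↔ β ^ 2 ≤ β * cos θ := by
  simp only [FirmlyNonexpansive, ← smul_sub, rot_sub, norm_smul, mul_pow, norm_sq_rot,
    inner_smul_right, inner_rot_self, norm_eq_abs, sq_abs, ← mul_assoc]
  constructor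
  · intro h
    obtain ⟨v, hv⟩ := exists_ne (0 : EuclideanSpace ℝ (Fin 2))
    simpa [sub_zero, hv] using h v 0
  · intro h x y
    exact mul_le_mul_of_nonneg_right h (sq_nonneg _)

theorem stmt16 (n : ℕ) (hn : 2 ≤ n) (θ : ℝ)
    (h₁ : 1 / Real.sqrt (2 * n) ≤ Real.cos θ) (h₂ : Real.cos θ < 1 / Real.sqrt 2)
    (α : ℝ) (hα : α = 1 / (2 * n * Real.cos θ)) :
    FirmlyNonexpansive (fun x => α • rot θ x) ∧
      FirmlyNonexpansive (fun x => α • rot (-θ) x) ∧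
      (∀ x : EuclideanSpace ℝ (Fin 2),
        (n : ℝ) • (α • rot θ x) + (n : ℝ) • (α • rot (-θ) x) = x) ∧
      ¬ FirmlyNonexpansive (fun x => (n : ℝ) • (α • rot θ x)) := by
  have hn_pos : (0 : ℝ) < n := by positivity
  rw [one_div, ← sqrt_inv, sqrt_le_iff, inv_le_iff_one_le_mul₀' (by positivity)] at h₁
  rw [one_div, ← sqrt_inv, lt_sqrt h₁.1] at h₂
  obtain ⟨hcos_nonneg, hcos_sq⟩ := h₁
  have hcos_pos : 0 < cos θ := hcos_nonneg.lt_of_ne' fun h => by norm_num [h] at hcos_sq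
  have hα_mul : 2 * n * cos θ * α = 1 := by
    rw [hα]; field_simp
  have hα_pos : 0 < α := by rw [hα]; positivity
  have hα_sq_le : α ^ 2 ≤ α * cos θ := by nlinarith
  refine ⟨(firmlyNonexpansive_smul_rot_iff α θ).2 hα_sq_le, ?_, fun x => ?_, ?_⟩
  · rwa [firmlyNonexpansive_smul_rot_iff, cos_neg]
  · rw [← smul_add, ← smul_add, rot_add_rot_neg, smul_smul, smul_smul]
    convert one_smul ℝ x using 2
    linear_combination hα_mul
  · simp only [smul_smul, firmlyNonexpansive_smul_rot_iff]
    nlinarith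
end

section
/- Let C be the closed unit ball of X centered at 0, T := Id − P_C, and n ∈ ℕ. Then T^n = Id − P_{nC}, where P_{nC} is the projection (nearest point map) onto the ball of radius n (for n = 0, P_{0C} is the zero map). -/
open scoped RealInnerProductSpace

noncomputable def ballProj {X : Type*} [NormedAddCommGroup X] [InnerProductSpace ℝ X]
    (r : ℝ) (x : X) : X :=
  if ‖x‖ ≤ r then x else (r / ‖x‖) • x

theorem stmt18 {X : Type*} [NormedAddCommGroup X] [InnerProductSpace ℝ X]
    (T : X → X) (hT : T = fun x => x - ballProj 1 x) (n : ℕ) :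
    T^[n] = fun x => x - ballProj (n : ℝ) x := by
  subst hT
  induction n with
  | zero =>
    funext x
    simp only [Function.iterate_zero, id_eq, ballProj, Nat.cast_zero]
    split_ifs with h
    · have hx : x = 0 := norm_le_zero_iff.mp h
      simp [hx]
    · simp
  | succ n ih =>
    funext x
    rw [Function.iterate_succ_apply', ih]
    show x - ballProj (n:ℝ) x - ballProj 1 (x - ballProj (n:ℝ) x)
        = x - ballProj ((n:ℕ) + 1 : ℕ) x
    push_cast
    by_cases h1 : ‖x‖ ≤ (n : ℝ)
    · have h2 : ‖x‖ ≤ (n : ℝ) + 1 := h1.trans (by linarith)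
      rw [show ballProj (n:ℝ) x = x from if_pos h1, sub_self,
        show ballProj (1:ℝ) (0:X) = 0 from by simp [ballProj],
        show ballProj ((n:ℝ)+1) x = x from if_pos h2]
      simp
    · push_neg at h1
      have hx0 : (0 : ℝ) < ‖x‖ := lt_of_le_of_lt (Nat.cast_nonneg n) h1
      have hxne : ‖x‖ ≠ 0 := ne_of_gt hx0
      have hy : x - ballProj (n : ℝ) x = ((‖x‖ - n) / ‖x‖) • x := by
        rw [show ballProj (n:ℝ) x = ((n:ℝ)/‖x‖) • x from if_neg (not_le.mpr h1)]
        rw [sub_div, div_self hxne, sub_smul, one_smul]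
      have hny : ‖x - ballProj (n : ℝ) x‖ = ‖x‖ - n := by
        rw [hy, norm_smul, Real.norm_eq_abs,
          abs_of_nonneg (div_nonneg (by linarith) hx0.le), div_mul_cancel₀ _ hxne]
      by_cases h2 : ‖x‖ ≤ (n : ℝ) + 1
      · have hle : ‖x - ballProj (n : ℝ) x‖ ≤ 1 := by rw [hny]; linarith
        rw [show ballProj (1:ℝ) (x - ballProj (n:ℝ) x) = x - ballProj (n:ℝ) x
            from if_pos hle, sub_self,
          show ballProj ((n:ℝ)+1) x = x from if_pos h2, sub_self]
      · push_neg at h2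
        have hyg : ¬ ‖x - ballProj (n : ℝ) x‖ ≤ 1 := by rw [hny]; push_neg; linarith
        rw [show ballProj (1:ℝ) (x - ballProj (n:ℝ) x)
            = ((1:ℝ) / ‖x - ballProj (n:ℝ) x‖) • (x - ballProj (n:ℝ) x) from if_neg hyg,
          show ballProj ((n:ℝ)+1) x = (((n:ℝ)+1)/‖x‖) • x from if_neg (not_le.mpr h2),
          hny, hy, smul_smul, ← sub_smul,
          show x - (((n:ℝ)+1)/‖x‖) • x = (1 - ((n:ℝ)+1)/‖x‖) • x by
            rw [sub_smul, one_smul]]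
        congr 1
        have hne : ‖x‖ - (n:ℝ) ≠ 0 := sub_ne_zero.mpr (ne_of_gt h1)
        field_simp
        ring
end

section
/- Let C be the closed unit ball of X, T := Id − P_C, and n ∈ ℕ. Then the map T^n − T^{n+1} = P_{(n+1)C} − P_{nC} is monotone: ⟪x − y, (T^n − T^{n+1})x − (T^n − T^{n+1})y⟫ ≥ 0 for all x, y ∈ X. -/
open scoped RealInnerProductSpace

lemma ballProj_zero' {X : Type*} [NormedAddCommGroup X] [InnerProductSpace ℝ X]
    (x : X) : ballProj (0 : ℝ) x = 0 := by
  unfold ballProj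
  split_ifs with h
  · have : ‖x‖ = 0 := le_antisymm h (norm_nonneg x)
    simpa using this
  · simp

lemma ballProj_key {X : Type*} [NormedAddCommGroup X] [InnerProductSpace ℝ X]
    (s : ℝ) (hs : 0 ≤ s) (x : X) :
    (x - ballProj s x) - ballProj 1 (x - ballProj s x) = x - ballProj (s + 1) x := by
  unfold ballProj
  by_cases h1 : ‖x‖ ≤ s
  · rw [if_pos h1, if_pos (by linarith : ‖x‖ ≤ s + 1)]
    simp
  · rw [if_neg h1]
    push_neg at h1
    have ha : 0 < ‖x‖ := lt_of_le_of_lt hs h1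
    have hy : x - (s / ‖x‖) • x = ((‖x‖ - s) / ‖x‖) • x := by
      nth_rewrite 1 [← one_smul ℝ x]
      rw [← sub_smul]
      congr 1
      field_simp
    rw [hy]
    have hny : ‖((‖x‖ - s) / ‖x‖) • x‖ = ‖x‖ - s := by
      rw [norm_smul, Real.norm_eq_abs, abs_of_nonneg (div_nonneg (by linarith) ha.le), div_mul_cancel₀]
      exact ha.ne'
    by_cases h2 : ‖x‖ ≤ s + 1
    · rw [if_pos (by rw [hny]; linarith), if_pos h2]
      simp
    · push_neg at h2
      rw [if_neg (by rw [hny]; push_neg; linarith), if_neg (not_le.mpr h2), hny]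
      have h4 : ‖x‖ ≠ 0 := ha.ne'
      have h3 : ‖x‖ - s ≠ 0 := by linarith
      match_scalars
      field_simp
      ring
  
lemma iterate_formula {X : Type*} [NormedAddCommGroup X] [InnerProductSpace ℝ X]
    (T : X → X) (hT : T = fun x => x - ballProj 1 x) (n : ℕ) (x : X) :
    T^[n] x = x - ballProj (n : ℝ) x := by
  induction n with
  | zero => simp [ballProj_zero']
  | succ n ih =>
    rw [Function.iterate_succ_apply', ih, hT]
    simp only
    rw [ballProj_key (n : ℝ) (Nat.cast_nonneg n) x]
    push_cast
    ring_nf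

lemma diff_formula {X : Type*} [NormedAddCommGroup X] [InnerProductSpace ℝ X]
    (r s : ℝ) (hs : 0 ≤ s) (hrs : s ≤ r) (x : X) :
    ballProj r x - ballProj s x = ((min ‖x‖ r - min ‖x‖ s) / ‖x‖) • x := by
  by_cases hx : x = 0
  · simp [hx, ballProj, hs.trans hrs, hs]
  · have ha : 0 < ‖x‖ := norm_pos_iff.mpr hx
    unfold ballProj
    by_cases h1 : ‖x‖ ≤ r
    · rw [if_pos h1]
      by_cases h2 : ‖x‖ ≤ s
      · rw [if_pos h2, min_eq_left h1, min_eq_left h2]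
        simp
      · rw [if_neg h2, min_eq_left h1, min_eq_right (le_of_not_ge h2)]
        rw [eq_comm, sub_div, div_self ha.ne', sub_smul, one_smul]
    · rw [if_neg h1, if_neg (fun h => h1 (h.trans hrs)), min_eq_right (le_of_not_ge h1),
        min_eq_right ((le_of_not_ge h1).trans' hrs : s ≤ ‖x‖)]
      rw [← sub_smul, ← sub_div]

lemma phiMono (n a b : ℝ) (h : b ≤ a) :
    min b (n + 1) - min b n ≤ min a (n + 1) - min a n := by
  simp only [min_def]
  split_ifs <;> linarith

set_option maxHeartbeats 1000000 in
theorem stmt19 {X : Type*} [NormedAddCommGroup X] [InnerProductSpace ℝ X]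
    (T : X → X) (hT : T = fun x => x - ballProj 1 x) (n : ℕ) :
    (∀ x : X, T^[n] x - T^[n + 1] x = ballProj ((n : ℝ) + 1) x - ballProj (n : ℝ) x) ∧
    (∀ x y : X,
      0 ≤ ⟪x - y, (T^[n] x - T^[n + 1] x) - (T^[n] y - T^[n + 1] y)⟫) := by
  have hfor : ∀ x : X, T^[n] x - T^[n + 1] x = ballProj ((n : ℝ) + 1) x - ballProj (n : ℝ) x := by
    intro x
    rw [iterate_formula T hT n x, iterate_formula T hT (n + 1) x]
    push_cast
    abel
  refine ⟨hfor, fun x y => ?_⟩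
  rw [hfor x, hfor y]
  have hn : (0 : ℝ) ≤ (n : ℝ) := Nat.cast_nonneg n
  rw [diff_formula ((n : ℝ) + 1) (n : ℝ) hn (by linarith) x,
    diff_formula ((n : ℝ) + 1) (n : ℝ) hn (by linarith) y]
  set a := ‖x‖ with ha
  set b := ‖y‖ with hb
  set ca := (min a ((n : ℝ) + 1) - min a (n : ℝ)) / a with hca
  set cb := (min b ((n : ℝ) + 1) - min b (n : ℝ)) / b with hcb
  have hca0 : 0 ≤ ca := by
    apply div_nonneg _ (norm_nonneg x)
    have : min a (n : ℝ) ≤ min a ((n : ℝ) + 1) := min_le_min le_rfl (by linarith)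
    linarith
  have hcb0 : 0 ≤ cb := by
    apply div_nonneg _ (norm_nonneg y)
    have : min b (n : ℝ) ≤ min b ((n : ℝ) + 1) := min_le_min le_rfl (by linarith)
    linarith
  have hcaa : ca * a = min a ((n : ℝ) + 1) - min a (n : ℝ) := by
    rcases eq_or_lt_of_le (ha ▸ norm_nonneg x : (0:ℝ) ≤ a) with h | h
    · rw [hca, ← h]; simp [min_eq_left hn, min_eq_left (by linarith : (0:ℝ) ≤ (n:ℝ)+1)]
    · rw [hca, div_mul_cancel₀ _ h.ne']
  have hcbb : cb * b = min b ((n : ℝ) + 1) - min b (n : ℝ) := by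
    rcases eq_or_lt_of_le (hb ▸ norm_nonneg y : (0:ℝ) ≤ b) with h | h
    · rw [hcb, ← h]; simp [min_eq_left hn, min_eq_left (by linarith : (0:ℝ) ≤ (n:ℝ)+1)]
    · rw [hcb, div_mul_cancel₀ _ h.ne']
  have hphi : 0 ≤ (a - b) * (ca * a - cb * b) := by
    rw [hcaa, hcbb]
    rcases le_total b a with h | h
    · exact mul_nonneg (by linarith) (sub_nonneg.2 (phiMono (n : ℝ) a b h))
    · exact mul_nonneg_iff.2 (Or.inr ⟨by linarith, sub_nonpos.2 (phiMono (n : ℝ) b a h)⟩)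
  have hip : ⟪x, y⟫ ≤ a * b := real_inner_le_norm x y
  have expand : ⟪x - y, ca • x - cb • y⟫
      = ca * a ^ 2 + cb * b ^ 2 - (ca + cb) * ⟪x, y⟫ := by
    rw [inner_sub_left, inner_sub_right, inner_sub_right, real_inner_smul_right,
      real_inner_smul_right, real_inner_smul_right, real_inner_smul_right,
      real_inner_self_eq_norm_sq, real_inner_self_eq_norm_sq,
      real_inner_comm y x]
    ring
  rw [expand]
  nlinarith [mul_nonneg (add_nonneg hca0 hcb0) (sub_nonneg.mpr hip)]
end
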